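/- arXiv:0708.1491 — 4 statements merged into one kernel-verified Lean document; each statement's English description precedes it below -/
import Mathlib

section
/- For every integer n ≥ 1 and every n-chain x such that s(x) is an n-chain, the function s(s(x)) is an n-chain if and only if the components x_0, …, x_{n-1} are not all distinct (i.e., x is not injective). -/
/-- The counting operator: `countOp n x j` is the number of indices `i` with `x i = j`. -/
def countOp (n : ℕ) (x : Fin n → ℕ) : Fin n → ℕ :=
  fun j => (Finset.univ.filter fun i => x i = (j : ℕ)).card

/-! An entry of `s(y)` equals `n` exactly when `y` is constant. If `x` is injective then
`s(x) ≡ 1`, so `s(s(x))` takes the value `n` at `1`. Conversely, if `s(x)` is a constant `j`,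
then `n * j = ∑ s(x) = n` forces `j = 1`, i.e. every value is taken exactly once. -/

open Finset

lemma countOp_lt_iff {n : ℕ} (x : Fin n → ℕ) (j : Fin n) :
    countOp n x j < n ↔ ∃ i, x i ≠ j := by
  have hle : countOp n x j ≤ n := by
    simpa [countOp] using card_filter_le (univ : Finset (Fin n)) fun i => x i = (j : ℕ)
  have heq : countOp n x j = n ↔ ∀ i, x i = j := by
    simpa [countOp] using
      card_filter_eq_iff (s := (univ : Finset (Fin n))) (p := fun i => x i = (j : ℕ))
  rw [hle.lt_iff_ne, Ne, heq, not_forall]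

lemma sum_countOp {n : ℕ} {x : Fin n → ℕ} (hx : ∀ i, x i < n) :
    ∑ j, countOp n x j = n := by
  calc ∑ j, countOp n x j = ∑ k ∈ range n, #{i | x i = k} :=
        Fin.sum_univ_eq_sum_range (fun k => #{i | x i = k}) n
    _ = #(univ : Finset (Fin n)) :=
        (card_eq_sum_card_fiberwise fun i _ => mem_range.mpr (hx i)).symm
    _ = n := by simp

lemma injective_iff_forall_countOp_eq_one {n : ℕ} {x : Fin n → ℕ} (hx : ∀ i, x i < n) :
    Function.Injective x ↔ ∀ j, countOp n x j = 1 := by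
  constructor
  · intro hinj j
    have hsurj : Function.Surjective fun i => (⟨x i, hx i⟩ : Fin n) :=
      Finite.surjective_of_injective fun a b hab => hinj (congrArg Fin.val hab)
    obtain ⟨i₀, hi₀⟩ := hsurj j
    refine le_antisymm (card_le_one.mpr ?_) (card_pos.mpr ⟨i₀, ?_⟩)
    · simp only [mem_filter, mem_univ, true_and]
      rintro a ha b hb
      exact hinj (ha.trans hb.symm)
    · simp [← hi₀]
  · intro hone a b hab
    exact card_le_one.mp (hone ⟨x a, hx a⟩).le a (by simp) b (by simp [hab])

theorem countOp_countOp_isChain_iff (n : ℕ) (hn : 1 ≤ n) (x : Fin n → ℕ)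
    (hx : ∀ i, x i < n) (hsx : ∀ j, countOp n x j < n) :
    (∀ j, countOp n (countOp n x) j < n) ↔ ¬ Function.Injective x := by
  simp only [countOp_lt_iff, injective_iff_forall_countOp_eq_one hx]
  constructor
  · intro hchain hone
    have h1n : 1 < n := by simpa [hone] using hsx ⟨0, hn⟩
    obtain ⟨k, hk⟩ := hchain ⟨1, h1n⟩
    exact hk (hone k)
  · intro hnot j
    by_contra! hconst
    have hsum : n * j = n * 1 := by simpa [hconst] using sum_countOp hx
    have hj : (j : ℕ) = 1 := Nat.eq_of_mul_eq_mul_left hn hsum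
    exact hnot fun k => (hconst k).trans hj
end

section
/- Let n ≥ 4 and let x ∈ 𝒩 belong to a circuit of the counting operator, i.e., s^[l](x) = x for some integer l ≥ 1. Then ∑_{j=0}^{n-1} x_j = n and ∑_{j=0}^{n-1} j · x_j = n; consequently x_0 = ∑_{j=1}^{n-1} (j − 1) · x_j. -/
/-- `𝒩`: the set of `n`-chains that are neither constant nor injective. -/
def NSet (n : ℕ) : Set (Fin n → ℕ) :=
  {x | (∀ i, x i < n) ∧ (¬ ∃ c, ∀ i, x i = c) ∧ ¬ Function.Injective x}

open Finset Function

lemma Function.IsPeriodicPt.exists_isPeriodicPt_apply_eq {α : Type*} {f : α → α} {l : ℕ} {x : α}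
    (hl : 0 < l) (hx : IsPeriodicPt f l x) : ∃ y, IsPeriodicPt f l y ∧ f y = x :=
  (bijOn_ptsOfPeriod f hl).surjOn hx

namespace countOp

variable {n : ℕ}

lemma le (y : Fin n → ℕ) (j : Fin n) : countOp n y j ≤ n :=
  (card_filter_le _ _).trans_eq (card_fin n)

lemma apply_eq_of_countOp_eq {y : Fin n → ℕ} {j : Fin n} (h : countOp n y j = n) (i : Fin n) :
    y i = j :=
  card_filter_eq_iff.mp (h.trans (card_fin n).symm) i (mem_univ i)

lemma lt_of_not_const {y : Fin n → ℕ} (hy : ¬ ∃ c, ∀ i, y i = c) (j : Fin n) :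
    countOp n y j < n :=
  (le y j).lt_of_ne fun h => hy ⟨j, apply_eq_of_countOp_eq h⟩

lemma sum_eq_card_lt (y : Fin n → ℕ) : ∑ j, countOp n y j = #{i | y i < n} := by
  simp only [countOp, card_filter]
  rw [sum_comm]
  refine sum_congr rfl fun i _ => ?_
  rw [Fin.sum_univ_eq_sum_range (fun j => if y i = j then 1 else 0) n, sum_ite_eq]
  simp only [mem_range]

lemma sum_le (y : Fin n → ℕ) : ∑ j, countOp n y j ≤ n :=
  (sum_eq_card_lt y).trans_le ((card_filter_le _ _).trans_eq (card_fin n))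

lemma sum_eq_of_lt {y : Fin n → ℕ} (hy : ∀ i, y i < n) : ∑ j, countOp n y j = n := by
  rw [sum_eq_card_lt, filter_true_of_mem fun i _ => hy i, card_univ, Fintype.card_fin]

lemma sum_mul_eq_sum_lt (y : Fin n → ℕ) :
    ∑ j : Fin n, (j : ℕ) * countOp n y j = ∑ i with y i < n, y i := by
  simp only [countOp, card_filter, mul_sum, mul_ite, mul_one, mul_zero, sum_filter]
  rw [sum_comm]
  refine sum_congr rfl fun i _ => ?_
  rw [Fin.sum_univ_eq_sum_range (fun j => if y i = j then j else 0) n, sum_ite_eq]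
  simp only [mem_range]

lemma sum_mul_eq_of_lt {y : Fin n → ℕ} (hy : ∀ i, y i < n) :
    ∑ j : Fin n, (j : ℕ) * countOp n y j = ∑ i, y i := by
  rw [sum_mul_eq_sum_lt, filter_true_of_mem fun i _ => hy i]

lemma countOp_ne_zero (hn : 2 ≤ n) (v : Fin n → ℕ) : countOp n (countOp n v) ≠ 0 := by
  intro h
  have hge : ∀ i, n ≤ countOp n v i := by
    have hcard : #{i | countOp n v i < n} = 0 := by
      rw [← sum_eq_card_lt, h]
      exact sum_const_zero
    simpa using card_filter_eq_zero_iff.mp hcard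
  have h0 := apply_eq_of_countOp_eq ((le v ⟨0, by omega⟩).antisymm (hge _)) ⟨0, by omega⟩
  have h1 := apply_eq_of_countOp_eq ((le v ⟨1, by omega⟩).antisymm (hge _)) ⟨0, by omega⟩
  exact zero_ne_one (h0.symm.trans h1)

lemma countOp_ne_one (hn : 4 ≤ n) (v : Fin n → ℕ) : countOp n (countOp n v) ≠ 1 := by
  intro h
  have hlt : ∀ i, countOp n v i < n := by
    have hcard : #{i | countOp n v i < n} = #(univ : Finset (Fin n)) := by
      rw [← sum_eq_card_lt, h, card_univ, Fintype.card_fin]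
      simp
    simpa using card_filter_eq_iff.mp hcard
  have hgauss : (∑ j : Fin n, (j : ℕ)) * 2 = n * (n - 1) := by
    rw [Fin.sum_univ_eq_sum_range (fun j => j) n, sum_range_id_mul_two]
  have hsum : ∑ j : Fin n, (j : ℕ) ≤ n :=
    calc ∑ j : Fin n, (j : ℕ) = ∑ j : Fin n, (j : ℕ) * countOp n (countOp n v) j := by simp [h]
      _ = ∑ i, countOp n v i := sum_mul_eq_of_lt hlt
      _ ≤ n := sum_le v
  have : n * 3 ≤ n * (n - 1) := Nat.mul_le_mul_left n (by omega)
  omega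

lemma countOp_not_const (hn : 4 ≤ n) (v : Fin n → ℕ) :
    ¬ ∃ c, ∀ j, countOp n (countOp n v) j = c := by
  rintro ⟨c, hc⟩
  have hnc : n * c ≤ n := by
    simpa [hc, mul_comm] using sum_le (countOp n v)
  obtain rfl | rfl : c = 0 ∨ c = 1 := by
    have : c ≤ 1 := by nlinarith
    omega
  · exact countOp_ne_zero (by omega) v (funext hc)
  · exact countOp_ne_one hn v (funext hc)

lemma lt_of_isPeriodicPt (hn : 4 ≤ n) {l : ℕ} (hl : 0 < l) {x : Fin n → ℕ}
    (hx : IsPeriodicPt (countOp n) l x) (i : Fin n) : x i < n := by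
  obtain ⟨y, hy, rfl⟩ := hx.exists_isPeriodicPt_apply_eq hl
  obtain ⟨z, hz, rfl⟩ := hy.exists_isPeriodicPt_apply_eq hl
  obtain ⟨w, -, rfl⟩ := hz.exists_isPeriodicPt_apply_eq hl
  exact lt_of_not_const (countOp_not_const hn w) i

end countOp

lemma Fin.sum_sub_one_mul_add_sum {n : ℕ} (hn : 0 < n) (f : Fin n → ℕ) :
    ∑ j : Fin n, ((j : ℕ) - 1) * f j + ∑ j, f j = ∑ j : Fin n, (j : ℕ) * f j + f ⟨0, hn⟩ := by
  obtain ⟨m, rfl⟩ := Nat.exists_eq_succ_of_ne_zero hn.ne'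
  simp only [Fin.sum_univ_succ, Fin.val_zero, Fin.val_succ, Nat.add_sub_cancel, zero_tsub,
    zero_mul, zero_add, add_mul, one_mul, sum_add_distrib]
  simp only [Fin.mk_zero]
  ring

theorem circuit_sums (n : ℕ) (hn : 4 ≤ n) (x : Fin n → ℕ)
    (hcirc : ∃ l, 1 ≤ l ∧ (countOp n)^[l] x = x) :
    (∑ j : Fin n, x j = n) ∧ (∑ j : Fin n, (j : ℕ) * x j = n) ∧
      x ⟨0, by omega⟩ = ∑ j : Fin n, ((j : ℕ) - 1) * x j := by
  obtain ⟨l, hl, hper⟩ := hcirc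
  obtain ⟨u, hu, rfl⟩ := IsPeriodicPt.exists_isPeriodicPt_apply_eq hl hper
  obtain ⟨v, hv, rfl⟩ := hu.exists_isPeriodicPt_apply_eq hl
  have hsum := countOp.sum_eq_of_lt (countOp.lt_of_isPeriodicPt hn hl hu)
  have hmul : ∑ j : Fin n, (j : ℕ) * countOp n (countOp n v) j = n := by
    rw [countOp.sum_mul_eq_of_lt (countOp.lt_of_isPeriodicPt hn hl hu),
      countOp.sum_eq_of_lt (countOp.lt_of_isPeriodicPt hn hl hv)]
  have := Fin.sum_sub_one_mul_add_sum (by omega) (countOp n (countOp n v))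
  exact ⟨hsum, hmul, by omega⟩
end

section
/- For every integer n ≥ 1 there is no group of more than 3 sociable n-chains: there do not exist an integer l ≥ 4 and an n-chain x such that the chains x, s(x), s^[2](x), …, s^[l−1](x) are pairwise distinct n-chains and s^[l](x) = x. -/
open Function

theorem Function.IsPeriodicPt.minimalPeriod_eq_of_iterate_ne {α : Type*} {f : α → α} {x : α}
    {l : ℕ} (hx : IsPeriodicPt f l x) (hl : 0 < l)
    (hne : ∀ k < l, ∀ k' < l, k ≠ k' → f^[k] x ≠ f^[k'] x) : minimalPeriod f x = l := by
  have hpos : 0 < minimalPeriod f x := hx.minimalPeriod_pos hl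
  refine (hx.minimalPeriod_le hl).antisymm (not_lt.1 fun hlt => ?_)
  exact hne _ hlt 0 hl hpos.ne' (iterate_minimalPeriod (f := f))

theorem Function.Periodic.forall_le_of_add_two {f : ℕ → ℕ} {l c : ℕ} (hf : Periodic f l)
    (hl : 0 < l) (h : ∀ k, f (k + 2) ≤ c ∨ f (k + 2) < f k) (k : ℕ) : f k ≤ c := by
  obtain ⟨k₀, -, hmax⟩ := (Finset.range l).exists_max_image f ⟨0, Finset.mem_range.2 hl⟩
  have hle : ∀ k, f k ≤ f k₀ := fun k =>
    hf.map_mod_nat k ▸ hmax _ (Finset.mem_range.2 (Nat.mod_lt k hl))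
  have hk₀ : f (k₀ + 2 * l - 2 + 2) = f k₀ := by
    rw [Nat.sub_add_cancel (by omega)]; exact hf.nat_mul 2 k₀
  rcases h (k₀ + 2 * l - 2) with h' | h' <;> rw [hk₀] at h'
  · exact (hle k).trans h'
  · exact absurd (hle _) (not_le.2 h')

theorem Finset.card_mul_succ_le_two_mul_sum {s : Finset ℕ} (hs : 0 ∉ s) :
    s.card * (s.card + 1) ≤ 2 * ∑ a ∈ s, a := by
  induction s using Finset.induction_on_max with
  | empty => simp
  | insert a s hlt ih =>
    have has : a ∉ s := fun h => lt_irrefl a (hlt a h)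
    have hcard : s.card + 1 ≤ a := by
      have : s ⊆ Finset.Ioo 0 a := fun b hb =>
        Finset.mem_Ioo.2 ⟨Nat.pos_of_ne_zero fun h => hs (by simp [← h, hb]), hlt b hb⟩
      have ha : a ≠ 0 := fun h => hs (by simp [h])
      have := Finset.card_le_card this
      rw [Nat.card_Ioo] at this
      omega
    rw [Finset.card_insert_of_notMem has, Finset.sum_insert has]
    have := ih fun h => hs (Finset.mem_insert_of_mem h)
    nlinarith

namespace Multiset

variable {α : Type*} [DecidableEq α]

theorem card_toFinset_mul_succ_le_two_mul_sum {S : Multiset ℕ} (hS : 0 ∉ S) :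
    S.toFinset.card * (S.toFinset.card + 1) ≤ 2 * S.sum := by
  have h := Finset.card_mul_succ_le_two_mul_sum (s := S.toFinset) (by simpa using hS)
  have : ∑ a ∈ S.toFinset, a ≤ S.sum := by
    obtain ⟨u, hu⟩ := le_iff_exists_add.1 (dedup_le S)
    calc ∑ a ∈ S.toFinset, a = S.dedup.sum := by simp [Finset.sum_eq_multiset_sum, toFinset_val]
      _ ≤ S.dedup.sum + u.sum := Nat.le_add_right _ _
      _ = S.sum := by rw [← sum_add, ← hu]
  omega

def multiplicities (M : Multiset α) : Multiset ℕ := M.toFinset.val.map M.count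

theorem sum_multiplicities (M : Multiset α) : (multiplicities M).sum = card M :=
  toFinset_sum_count_eq M

theorem card_multiplicities (M : Multiset α) : card (multiplicities M) = M.toFinset.card :=
  card_map _ _

theorem zero_notMem_multiplicities (M : Multiset α) : 0 ∉ multiplicities M := fun h0 => by
  obtain ⟨b, hb, hb0⟩ := mem_map.1 h0
  exact count_ne_zero.2 (mem_toFinset.1 hb) hb0

theorem le_card_of_mem_multiplicities {M : Multiset α} {a : ℕ} (ha : a ∈ multiplicities M) :
    a ≤ card M := by
  obtain ⟨b, -, rfl⟩ := mem_map.1 ha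
  exact count_le_card b M

theorem multiplicities_eq_cons_of_mem {a : α} {M : Multiset α} (ha : a ∈ M) :
    multiplicities M = M.count a ::ₘ multiplicities (M.filter (· ≠ a)) := by
  have hM : M.toFinset = insert a (M.filter (· ≠ a)).toFinset := by
    ext b; by_cases hb : b = a <;> simp [hb, ha]
  rw [multiplicities, hM, Finset.insert_val_of_notMem (by simp), map_cons, multiplicities]
  congr 1
  refine map_congr rfl fun b hb => ?_
  exact (count_filter_of_pos (p := (· ≠ a)) (mem_filter.1 (mem_toFinset.1 hb)).2).symm

theorem multiplicities_cons_of_notMem {a : α} {M : Multiset α} (ha : a ∉ M) :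
    multiplicities (a ::ₘ M) = 1 ::ₘ multiplicities M := by
  rw [multiplicities_eq_cons_of_mem (mem_cons_self a M), count_cons_self,
    count_eq_zero_of_notMem ha, filter_cons_of_neg _ (by simp),
    filter_eq_self.2 fun b hb => ne_of_mem_of_not_mem hb ha, zero_add]

theorem eq_replicate_one_of_sum_eq_card {S : Multiset ℕ} (hS : 0 ∉ S) (h : S.sum = card S) :
    S = replicate (card S) 1 := by
  induction S using Multiset.induction_on with
  | empty => rfl
  | cons a S ih =>
    have hS' : 0 ∉ S := fun h0 => hS (mem_cons_of_mem h0)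
    have ha : a ≠ 0 := fun h0 => hS (h0 ▸ mem_cons_self a S)
    have hle : card S ≤ S.sum := by
      simpa using card_nsmul_le_sum fun b hb =>
        Nat.one_le_iff_ne_zero.2 (ne_of_mem_of_not_mem hb hS')
    rw [sum_cons, card_cons] at h
    rw [card_cons, replicate_succ, ← ih hS' (by omega), show a = 1 by omega]

end Multiset

namespace CountOp

open Multiset Function

def chainValues {n : ℕ} (x : Fin n → ℕ) : Multiset ℕ := Finset.univ.val.map x

def countMultiset (n : ℕ) (M : Multiset ℕ) : Multiset ℕ := (range n).map M.count

def posPart (M : Multiset ℕ) : Multiset ℕ := M.filter (· ≠ 0)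

variable {n : ℕ}

theorem card_chainValues (x : Fin n → ℕ) : card (chainValues x) = n := by simp [chainValues]

theorem lt_of_mem_chainValues {x : Fin n → ℕ} (hx : ∀ j, x j < n) :
    ∀ a ∈ chainValues x, a < n := fun a ha => by
  obtain ⟨j, -, rfl⟩ := mem_map.1 ha
  exact hx j

theorem countOp_apply (x : Fin n → ℕ) (j : Fin n) :
    countOp n x j = (chainValues x).count (j : ℕ) := by
  rw [chainValues, count_map, countOp, Finset.card_def, Finset.filter_val]
  simp only [eq_comm]

theorem countOp_eq_of_chainValues_eq {x y : Fin n → ℕ} (h : chainValues x = chainValues y) :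
    countOp n x = countOp n y :=
  funext fun j => by rw [countOp_apply, countOp_apply, h]

theorem chainValues_countOp (x : Fin n → ℕ) :
    chainValues (countOp n x) = countMultiset n (chainValues x) := by
  have hrange : (Finset.univ : Finset (Fin n)).val.map Fin.val = range n := by
    simp [List.ofFn_eq_map, coe_range]
  rw [countMultiset, ← hrange, map_map]
  exact map_congr rfl fun j _ => countOp_apply x j

theorem sum_countMultiset {M : Multiset ℕ} (hM : ∀ a ∈ M, a < n) :
    (countMultiset n M).sum = card M :=
  sum_count_eq_card (s := Finset.range n) (by simpa using hM)

theorem posPart_countMultiset {M : Multiset ℕ} (hM : ∀ a ∈ M, a < n) :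
    posPart (countMultiset n M) = multiplicities M := by
  have h : (Finset.range n).filter (fun j => M.count j ≠ 0) = M.toFinset := by
    ext j
    simpa using fun hj => hM j hj
  rw [posPart, countMultiset, filter_map, multiplicities, ← congrArg Finset.val h]
  rfl

theorem posPart_add_replicate_count_zero (M : Multiset ℕ) :
    posPart M + replicate (M.count 0) 0 = M := by
  rw [← filter_eq', posPart]
  simpa using filter_add_not (· ≠ 0) M

/-- The state following one whose nonzero entries have multiplicities `S`. -/
def stateOfMultiplicities (n : ℕ) (S : Multiset ℕ) : Multiset ℕ :=
  ((n - S.sum) ::ₘ S) + replicate (n - (card S + 1)) 0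

def smallPartitions : List (Multiset ℕ) :=
  [0, {1}, {2}, {1, 1}, {3}, {2, 1}, {1, 1, 1}, {4}, {3, 1}, {2, 2}, {2, 1, 1}, {1, 1, 1, 1}]

theorem mem_smallPartitions {S : Multiset ℕ} (hS : 0 ∉ S) (hsum : S.sum ≤ 4) :
    S ∈ smallPartitions := by
  induction S using Multiset.induction_on with
  | empty => simp [smallPartitions]
  | cons a S ih =>
    rw [sum_cons] at hsum
    have ha : 1 ≤ a := Nat.pos_of_ne_zero fun h => hS (h ▸ mem_cons_self a S)
    have hS' := ih (fun h => hS (mem_cons_of_mem h)) (by omega)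
    have ha4 : a ≤ 4 := by omega
    fin_cases hS' <;> interval_cases a <;> revert hsum <;> decide

def multiplicitiesStep (S : Multiset ℕ) : Multiset ℕ := 1 ::ₘ multiplicities S

theorem iterate_six_multiplicitiesStep :
    ∀ S ∈ smallPartitions, multiplicitiesStep^[6] S = multiplicitiesStep^[4] S := by
  decide

theorem iterate_countMultiset_stateOfMultiplicities_of_lt_nine :
    ∀ n < 9, ∀ S ∈ smallPartitions, S.sum < n → card S + 2 ≤ n →
    (∀ j < 10, ∀ a ∈ (countMultiset n)^[j] (stateOfMultiplicities n S), a < n) →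
    (countMultiset n)^[8] (stateOfMultiplicities n S) =
        (countMultiset n)^[6] (stateOfMultiplicities n S) ∨
      (countMultiset n)^[9] (stateOfMultiplicities n S) =
        (countMultiset n)^[6] (stateOfMultiplicities n S) := by
  decide

/-- Modelled on the value multisets of the iterates of a chain under `countOp n` whose values
stay below `n` (see `isCountOrbit_chainValues`). -/
structure IsCountOrbit (n : ℕ) (M : ℕ → Multiset ℕ) : Prop where
  step : ∀ k, M (k + 1) = countMultiset n (M k)
  lt : ∀ k, ∀ a ∈ M k, a < n
  card_eq : ∀ k, card (M k) = n
  sum_eq : ∀ k, (M k).sum = n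

namespace IsCountOrbit

variable {M : ℕ → Multiset ℕ}

theorem add_eq_iterate (h : IsCountOrbit n M) (k j : ℕ) :
    M (k + j) = (countMultiset n)^[j] (M k) := by
  induction j with
  | zero => rfl
  | succ j ih => rw [← add_assoc, h.step, ih, iterate_succ_apply']

theorem zero_mem (h : IsCountOrbit n M) (hn : 0 < n) (k : ℕ) : 0 ∈ M k := by
  -- otherwise `M k` consists of `n` ones, and then `n ∈ M (k + 1)`
  by_contra h0
  have hrep := eq_replicate_one_of_sum_eq_card h0 (by rw [h.sum_eq, h.card_eq])
  rw [h.card_eq] at hrep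
  have h1n : 1 < n := h.lt k 1 (by rw [hrep]; exact mem_replicate.2 ⟨hn.ne', rfl⟩)
  have hmem : n ∈ M (k + 1) := by
    rw [h.step, countMultiset, hrep]
    exact mem_map.2 ⟨1, mem_range.2 h1n, by simp⟩
  exact lt_irrefl n (h.lt _ n hmem)

theorem count_zero (h : IsCountOrbit n M) (k : ℕ) :
    (M k).count 0 = n - card (posPart (M k)) := by
  have := congrArg card (posPart_add_replicate_count_zero (M k))
  rw [card_add, card_replicate, h.card_eq] at this
  omega

theorem card_posPart_lt (h : IsCountOrbit n M) (hn : 0 < n) (k : ℕ) :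
    card (posPart (M k)) < n := by
  have := count_pos.2 (h.zero_mem hn k)
  rw [h.count_zero] at this
  omega

theorem posPart_succ (h : IsCountOrbit n M) (hn : 0 < n) (k : ℕ) :
    posPart (M (k + 1)) =
      (n - card (posPart (M k))) ::ₘ multiplicities (posPart (M k)) := by
  rw [h.step, posPart_countMultiset (h.lt k), multiplicities_eq_cons_of_mem (h.zero_mem hn k),
    h.count_zero]
  rfl

theorem card_posPart_succ (h : IsCountOrbit n M) (hn : 0 < n) (k : ℕ) :
    card (posPart (M (k + 1))) = (posPart (M k)).toFinset.card + 1 := by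
  rw [h.posPart_succ hn, card_cons, card_multiplicities]

theorem succ_eq_stateOfMultiplicities (h : IsCountOrbit n M) (hn : 0 < n) (k : ℕ) :
    M (k + 1) = stateOfMultiplicities n (multiplicities (posPart (M k))) := by
  rw [← posPart_add_replicate_count_zero (M (k + 1)), h.count_zero, h.posPart_succ hn,
    stateOfMultiplicities, sum_multiplicities, card_cons]

theorem card_posPart_add_two (h : IsCountOrbit n M) (hn : 0 < n) (k : ℕ) :
    card (posPart (M (k + 2))) ≤ 4 ∨ card (posPart (M (k + 2))) < card (posPart (M k)) := by
  set t := (multiplicities (posPart (M k))).toFinset.card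
  have hstep : card (posPart (M (k + 2))) ≤ t + 2 := by
    rw [h.card_posPart_succ hn, h.posPart_succ hn, toFinset_cons]
    have := Finset.card_insert_le (n - card (posPart (M k)))
      (multiplicities (posPart (M k))).toFinset
    omega
  have htri : t * (t + 1) ≤ 2 * card (posPart (M k)) := by
    rw [← sum_multiplicities]
    exact card_toFinset_mul_succ_le_two_mul_sum (zero_notMem_multiplicities _)
  by_contra! hcon
  nlinarith

theorem card_posPart_le_four (h : IsCountOrbit n M) (hn : 0 < n) {l : ℕ} (hper : Periodic M l)
    (hl : 0 < l) (k : ℕ) : card (posPart (M k)) ≤ 4 :=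
  (hper.comp (card ∘ posPart)).forall_le_of_add_two hl (h.card_posPart_add_two hn) k

theorem apply_seven_eq_of_nine_le (h : IsCountOrbit n M) (hn : 9 ≤ n)
    (h4 : ∀ k, card (posPart (M k)) ≤ 4) : M 7 = M 5 := by
  have hstep : ∀ k, multiplicities (posPart (M (k + 1))) =
      multiplicitiesStep (multiplicities (posPart (M k))) := fun k => by
    rw [h.posPart_succ (by omega), multiplicitiesStep, multiplicities_cons_of_notMem]
    -- `n - card (posPart (M k)) ≥ 5` exceeds every multiplicity
    intro hmem
    have := le_card_of_mem_multiplicities hmem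
    have := h4 k
    omega
  have hiter : ∀ k, multiplicities (posPart (M k)) =
      multiplicitiesStep^[k] (multiplicities (posPart (M 0))) := fun k => by
    induction k with
    | zero => rfl
    | succ k ih => rw [hstep, ih, iterate_succ_apply']
  have hS : multiplicities (posPart (M 0)) ∈ smallPartitions :=
    mem_smallPartitions (zero_notMem_multiplicities _) (by rw [sum_multiplicities]; exact h4 0)
  rw [h.succ_eq_stateOfMultiplicities (by omega) 6, h.succ_eq_stateOfMultiplicities (by omega) 4,
    hiter 6, hiter 4, iterate_six_multiplicitiesStep _ hS]

theorem apply_nine_or_ten_eq_of_lt_nine (h : IsCountOrbit n M) (hn : 0 < n) (hn9 : n < 9)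
    (h4 : ∀ k, card (posPart (M k)) ≤ 4) : M 9 = M 7 ∨ M 10 = M 7 := by
  set S := multiplicities (posPart (M 0))
  have hM1 : M 1 = stateOfMultiplicities n S := h.succ_eq_stateOfMultiplicities hn 0
  have hS : S ∈ smallPartitions :=
    mem_smallPartitions (zero_notMem_multiplicities _) (by rw [sum_multiplicities]; exact h4 0)
  have hsum : S.sum < n := by rw [sum_multiplicities]; exact h.card_posPart_lt hn 0
  have hcard : card S + 2 ≤ n := by
    have := h.card_posPart_lt hn 1
    rw [h.card_posPart_succ hn, ← card_multiplicities] at this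
    exact this
  have hvalid : ∀ j < 10, ∀ a ∈ (countMultiset n)^[j] (stateOfMultiplicities n S), a < n :=
    fun j _ => hM1 ▸ h.add_eq_iterate 1 j ▸ h.lt (1 + j)
  simpa only [← hM1, ← h.add_eq_iterate] using
    iterate_countMultiset_stateOfMultiplicities_of_lt_nine n hn9 S hS hsum hcard hvalid

theorem exists_eq_add_two_or_three (h : IsCountOrbit n M) (hn : 0 < n) {l : ℕ}
    (hper : Periodic M l) (hl : 0 < l) : ∃ i, M (i + 2) = M i ∨ M (i + 3) = M i := by
  have h4 := h.card_posPart_le_four hn hper hl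
  rcases le_or_gt 9 n with hn9 | hn9
  · exact ⟨5, Or.inl (h.apply_seven_eq_of_nine_le hn9 h4)⟩
  · exact ⟨7, h.apply_nine_or_ten_eq_of_lt_nine hn hn9 h4⟩

end IsCountOrbit

theorem isCountOrbit_chainValues {x : Fin n → ℕ} (hx : ∀ k j, (countOp n)^[k] x j < n) :
    IsCountOrbit n fun k => chainValues ((countOp n)^[k + 1] x) where
  step k := by rw [iterate_succ_apply' _ (k + 1), chainValues_countOp]
  lt k := lt_of_mem_chainValues (hx (k + 1))
  card_eq k := card_chainValues _
  sum_eq k := by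
    rw [iterate_succ_apply', chainValues_countOp, sum_countMultiset (lt_of_mem_chainValues (hx k)),
      card_chainValues]

theorem minimalPeriod_countOp_dvd {x : Fin n → ℕ} (hx : x ∈ periodicPts (countOp n))
    {i p : ℕ}
    (h : chainValues ((countOp n)^[i + p + 1] x) = chainValues ((countOp n)^[i + 1] x)) :
    minimalPeriod (countOp n) x ∣ p := by
  have hper : IsPeriodicPt (countOp n) p ((countOp n)^[i + 2] x) := by
    have := countOp_eq_of_chainValues_eq h
    rw [← iterate_succ_apply' (countOp n), ← iterate_succ_apply' (countOp n)] at this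
    rw [IsPeriodicPt, IsFixedPt, ← iterate_add_apply]
    convert this using 2
    omega
  rw [← minimalPeriod_apply_iterate hx (i + 2)]
  exact hper.minimalPeriod_dvd

end CountOp

open CountOp Function in
theorem no_sociable_group_of_length_ge_four (n : ℕ) (hn : 1 ≤ n) :
    ¬ ∃ (l : ℕ) (x : Fin n → ℕ), 4 ≤ l ∧
      (∀ k < l, ∀ j, (countOp n)^[k] x j < n) ∧
      (∀ k < l, ∀ k' < l, k ≠ k' → (countOp n)^[k] x ≠ (countOp n)^[k'] x) ∧
      (countOp n)^[l] x = x := by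
  rintro ⟨l, x, hl, hlt, hne, hper⟩
  have hx : IsPeriodicPt (countOp n) l x := hper
  have hmin : minimalPeriod (countOp n) x = l := hx.minimalPeriod_eq_of_iterate_ne (by omega) hne
  have horbit := isCountOrbit_chainValues fun k =>
    hx.iterate_mod_apply k ▸ hlt _ (Nat.mod_lt k (by omega))
  have hperiodic : Periodic (fun k => chainValues ((countOp n)^[k + 1] x)) l := fun k => by
    show chainValues _ = chainValues _
    rw [add_right_comm, iterate_add_apply, hper]
  obtain ⟨i, hi | hi⟩ := horbit.exists_eq_add_two_or_three hn hperiodic (by omega) <;>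
  · have := hmin ▸ minimalPeriod_countOp_dvd (mk_mem_periodicPts (by omega) hx) hi
    have := Nat.le_of_dvd (by norm_num) this
    omega
end

section
/- For every integer n ≥ 4, the cardinality of the image of 𝒩 under the counting operator is |s(𝒩)| = C(2n−1, n) − n − 1, where C denotes the binomial coefficient. -/
open Finset Function

theorem Finset.Nat.card_antidiagonalTuple (k m : ℕ) :
    #(Nat.antidiagonalTuple k m) = (k + m - 1).choose m := by
  rw [← piAntidiag_univ_fin_eq_antidiagonalTuple, ← map_sym_eq_piAntidiag, card_map, sym_univ,
    card_univ, Sym.card_sym_eq_choose, Fintype.card_fin]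

section FiberCard

variable {α β : Type*} [Fintype α] [DecidableEq β]

def fiberCard (f : α → β) (b : β) : ℕ := #{a | f a = b}

theorem sum_fiberCard [Fintype β] (f : α → β) : ∑ b, fiberCard f b = Fintype.card α :=
  (card_eq_sum_card_fiberwise fun a _ => mem_univ (f a)).symm

theorem exists_fiberCard_eq [Fintype β] (c : β → ℕ) (hc : ∑ b, c b = Fintype.card α) :
    ∃ f : α → β, fiberCard f = c := by
  obtain ⟨e⟩ : Nonempty (α ≃ Σ b, Fin (c b)) := Fintype.card_eq.mp (by simp [hc])
  refine ⟨fun a => (e a).1, funext fun b => ?_⟩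
  calc fiberCard (fun a => (e a).1) b = #{p : Σ b, Fin (c b) | p.1 = b} :=
        card_equiv e (by simp)
    _ = c b := by rw [card_filter, Fintype.sum_sigma]; simp [apply_ite]

theorem range_fiberCard [Fintype β] :
    Set.range (fiberCard (α := α) (β := β)) = {c | ∑ b, c b = Fintype.card α} := by
  ext c
  constructor
  · rintro ⟨f, rfl⟩
    exact sum_fiberCard f
  · exact exists_fiberCard_eq c

theorem fiberCard_eq_one_iff (f : α → β) : fiberCard f = 1 ↔ Bijective f := by
  simp only [bijective_iff_existsUnique, funext_iff, Pi.one_apply, fiberCard, card_eq_one]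
  refine forall_congr' fun b => ?_
  simp [eq_singleton_iff_unique_mem, ExistsUnique]

theorem exists_fiberCard_eq_single_iff (f : α → β) :
    (∃ b, fiberCard f = Pi.single b (Fintype.card α)) ↔ ∃ b, ∀ a, f a = b := by
  refine exists_congr fun b => ⟨fun h a => ?_, fun h => funext fun b' => ?_⟩
  · have hb : #{a | f a = b} = Fintype.card α := by simpa [fiberCard] using congrFun h b
    rw [← card_univ, card_filter_eq_iff] at hb
    exact hb a (mem_univ a)
  · by_cases hbb : b' = b
    · subst hbb
      simp [fiberCard, h]
    · simp [fiberCard, h, hbb, Ne.symm hbb]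

end FiberCard

theorem countOp_val_comp {n : ℕ} (f : Fin n → Fin n) : countOp n (Fin.val ∘ f) = fiberCard f := by
  ext j
  simp [countOp, fiberCard, Fin.val_inj]

theorem NSet_eq_image {n : ℕ} (hn : 0 < n) :
    NSet n = (Fin.val ∘ ·) '' {f : Fin n → Fin n | (¬ ∃ j, ∀ i, f i = j) ∧ ¬ Injective f} := by
  ext x
  constructor
  · rintro ⟨hlt, hnc, hni⟩
    refine ⟨fun i => ⟨x i, hlt i⟩, ⟨?_, ?_⟩, rfl⟩
    · rintro ⟨j, hj⟩
      exact hnc ⟨j, fun i => congrArg Fin.val (hj i)⟩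
    · exact fun hinj => hni fun i i' h => hinj (Fin.ext h)
  · rintro ⟨f, ⟨hnc, hni⟩, rfl⟩
    refine ⟨fun i => (f i).isLt, ?_, fun h => hni (Fin.val_injective.of_comp_iff _ |>.mp h)⟩
    rintro ⟨c, hc⟩
    exact hnc ⟨f ⟨0, hn⟩, fun i => Fin.ext ((hc i).trans (hc _).symm)⟩

def degenerateCounts (n : ℕ) : Finset (Fin n → ℕ) :=
  insert 1 (univ.image fun j => Pi.single j n)

theorem mem_degenerateCounts {n : ℕ} {c : Fin n → ℕ} :
    c ∈ degenerateCounts n ↔ c = 1 ∨ ∃ j, c = Pi.single j n := by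
  simp [degenerateCounts, eq_comm]

theorem card_degenerateCounts {n : ℕ} (hn : 2 ≤ n) : #(degenerateCounts n) = n + 1 := by
  rw [degenerateCounts, card_insert_of_notMem, card_image_of_injective, card_univ,
    Fintype.card_fin]
  · intro j j' h
    by_contra hne
    have hn0 : n = 0 := by simpa [hne] using congrFun h j
    omega
  · simp only [mem_image, mem_univ, true_and, not_exists]
    intro j h
    have hn1 : n = 1 := by simpa [eq_comm] using congrFun h j
    omega

theorem degenerateCounts_subset (n : ℕ) : degenerateCounts n ⊆ Nat.antidiagonalTuple n n := by
  intro c hc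
  rcases mem_degenerateCounts.mp hc with rfl | ⟨j, rfl⟩ <;> simp [Nat.mem_antidiagonalTuple]

theorem image_countOp_NSet {n : ℕ} (hn : 0 < n) :
    countOp n '' NSet n = ↑(Nat.antidiagonalTuple n n \ degenerateCounts n) := by
  have hS : {f : Fin n → Fin n | (¬ ∃ j, ∀ i, f i = j) ∧ ¬ Injective f} =
      Set.univ \ fiberCard ⁻¹' degenerateCounts n := by
    ext f
    have hconst := exists_fiberCard_eq_single_iff f
    rw [Fintype.card_fin] at hconst
    rw [Set.mem_sdiff, Set.mem_preimage, mem_coe, mem_degenerateCounts, fiberCard_eq_one_iff,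
      hconst, ← Finite.injective_iff_bijective]
    simp only [Set.mem_ofPred_eq, Set.mem_univ, true_and, not_or, and_comm]
  rw [NSet_eq_image hn, Set.image_image]
  simp_rw [countOp_val_comp]
  rw [hS, Set.image_sdiff_preimage, Set.image_univ, range_fiberCard]
  ext c
  simp [Nat.mem_antidiagonalTuple]

theorem card_image_NSet (n : ℕ) (hn : 4 ≤ n) :
    (countOp n '' NSet n).ncard = (2 * n - 1).choose n - n - 1 := by
  rw [image_countOp_NSet (by omega), Set.ncard_coe_finset,
    card_sdiff_of_subset (degenerateCounts_subset n), Nat.card_antidiagonalTuple,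
    card_degenerateCounts (by omega), two_mul, Nat.sub_sub]
end
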